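/- arXiv:2207.00447 — 8 statements merged into one kernel-verified Lean document; each statement's English description precedes it below -/
import Mathlib

section
/- Let m be a probability measure on ℝ with c.d.f. F_U, and let Y1, Y2 be real-valued random variables. Then the excursion distance E_m(Y1,Y2) := ∫_ℝ [P(Y1>u)+P(Y2>u)-2P(Y1>u,Y2>u)] m(du) equals E|F_U(Y2-) - F_U(Y1-)|, where F_U(x-) denotes the left limit of F_U at x. -/
/-!
Both sides are the `m ⊗ P`-measure of `S = {(u, ω) | u < Y1 ω} ∆ {(u, ω) | u < Y2 ω}`.
Its `u`-slice is `{Y1 > u} ∆ {Y2 > u}`, whose `P`-measure is the integrand on the left, and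
its `ω`-slice is `Iio (Y1 ω) ∆ Iio (Y2 ω)`, whose `m`-measure is `|F_U(Y2 ω-) - F_U(Y1 ω-)|`
because the two intervals are nested. Fubini–Tonelli identifies the two iterated integrals.
-/

open MeasureTheory Set
open scoped symmDiff

namespace MeasureTheory

lemma measureReal_symmDiff_eq_add_sub_two_mul_inter {α : Type*} [MeasurableSpace α]
    (μ : Measure α) [IsFiniteMeasure μ] {s t : Set α} (hs : MeasurableSet s)
    (ht : MeasurableSet t) :
    μ.real (s ∆ t) = μ.real s + μ.real t - 2 * μ.real (s ∩ t) := by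
  have hunion := measureReal_union_add_inter (μ := μ) (s := s) ht
  have hsymm : s ∆ t = (s ∪ t) \ (s ∩ t) := symmDiff_eq_sup_sdiff_inf s t
  rw [hsymm, measureReal_sdiff (inter_subset_left.trans subset_union_left) (hs.inter ht)]
  linarith

lemma measureReal_symmDiff_Iio {α : Type*} [LinearOrder α] [TopologicalSpace α]
    [OrderClosedTopology α] [MeasurableSpace α] [OpensMeasurableSpace α]
    (μ : Measure α) [IsFiniteMeasure μ] (a b : α) :
    μ.real (Iio a ∆ Iio b) = |μ.real (Iio b) - μ.real (Iio a)| := by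
  wlog hab : a ≤ b generalizing a b
  · rw [symmDiff_comm, this b a (le_of_not_ge hab), abs_sub_comm]
  have hsub : Iio a ⊆ Iio b := Iio_subset_Iio hab
  rw [symmDiff_of_le hsub, measureReal_sdiff hsub measurableSet_Iio,
    abs_of_nonneg (sub_nonneg.2 (measureReal_mono hsub))]

section Prod

variable {α β : Type*} [MeasurableSpace α] [MeasurableSpace β]

lemma measureReal_prod_apply (μ : Measure α) (ν : Measure β) [IsFiniteMeasure ν]
    {s : Set (α × β)} (hs : MeasurableSet s) :
    (μ.prod ν).real s = ∫ x, ν.real (Prod.mk x ⁻¹' s) ∂μ := by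
  rw [measureReal_def, Measure.prod_apply hs]
  exact (integral_toReal (measurable_measure_prodMk_left hs).aemeasurable
    (ae_of_all _ fun _ => measure_lt_top ν _)).symm

lemma measureReal_prod_apply_symm (μ : Measure α) (ν : Measure β) [IsFiniteMeasure μ]
    [SFinite ν] {s : Set (α × β)} (hs : MeasurableSet s) :
    (μ.prod ν).real s = ∫ y, μ.real ((·, y) ⁻¹' s) ∂ν := by
  rw [measureReal_def, Measure.prod_apply_symm hs]
  exact (integral_toReal (measurable_measure_prodMk_right hs).aemeasurable
    (ae_of_all _ fun _ => measure_lt_top μ _)).symm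

lemma integral_measureReal_prodMk_left_eq_integral_measureReal_prodMk_right
    (μ : Measure α) (ν : Measure β) [IsFiniteMeasure μ] [IsFiniteMeasure ν]
    {s : Set (α × β)} (hs : MeasurableSet s) :
    ∫ x, ν.real (Prod.mk x ⁻¹' s) ∂μ = ∫ y, μ.real ((·, y) ⁻¹' s) ∂ν := by
  rw [← measureReal_prod_apply μ ν hs, measureReal_prod_apply_symm μ ν hs]

end Prod

end MeasureTheory

theorem stmt2 {Ω : Type*} [MeasurableSpace Ω] (P : Measure Ω) [IsProbabilityMeasure P]
    (m : Measure ℝ) [IsProbabilityMeasure m]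
    (Y1 Y2 : Ω → ℝ) (hY1 : Measurable Y1) (hY2 : Measurable Y2) :
    ∫ u, ((P {ω | Y1 ω > u}).toReal + (P {ω | Y2 ω > u}).toReal
        - 2 * (P {ω | Y1 ω > u ∧ Y2 ω > u}).toReal) ∂m
      = ∫ ω, |(m (Set.Iio (Y2 ω))).toReal - (m (Set.Iio (Y1 ω))).toReal| ∂P := by
  let S : Set (ℝ × Ω) := {p | p.1 < Y1 p.2} ∆ {p | p.1 < Y2 p.2}
  have hS : MeasurableSet S :=
    (measurableSet_lt measurable_fst (hY1.comp measurable_snd)).symmDiff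
      (measurableSet_lt measurable_fst (hY2.comp measurable_snd))
  have slice_left (u : ℝ) : Prod.mk u ⁻¹' S = {ω | Y1 ω > u} ∆ {ω | Y2 ω > u} := rfl
  have slice_right (ω : Ω) : (·, ω) ⁻¹' S = Iio (Y1 ω) ∆ Iio (Y2 ω) := rfl
  calc _ = ∫ u, P.real (Prod.mk u ⁻¹' S) ∂m := by
          congr 1 with u
          rw [slice_left]
          exact (measureReal_symmDiff_eq_add_sub_two_mul_inter P
            (hY1 measurableSet_Ioi) (hY2 measurableSet_Ioi)).symm
    _ = ∫ ω, m.real ((·, ω) ⁻¹' S) ∂P :=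
          integral_measureReal_prodMk_left_eq_integral_measureReal_prodMk_right m P hS
    _ = _ := by
          congr 1 with ω
          rw [slice_right, measureReal_symmDiff_Iio]
          rfl
end

section
/- Let m be a probability measure on ℝ whose c.d.f. F_U is continuous. Then for real-valued random variables Y1, Y2, the excursion distance E_m(Y1,Y2) equals E|F_U(Y2) - F_U(Y1)|. -/
/-!
Both sides are the `m ⊗ P`-measure of the excursion set
`{(u, ω) | u lies between Y1 ω and Y2 ω}` = `{u < Y1} ∆ {u < Y2}`, computed by Tonelli
in the two orders. Its section at `u` has `P`-measure
`P(Y1 > u) + P(Y2 > u) - 2 P(Y1 > u, Y2 > u)`; its section at `ω` is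
`[min (Y1 ω) (Y2 ω), max (Y1 ω) (Y2 ω))`, whose `m`-measure is `|F_U (Y2 ω) - F_U (Y1 ω)|`
because a continuous c.d.f. leaves no atoms.
-/

open MeasureTheory Set ProbabilityTheory
open scoped symmDiff

theorem Set.Iio_symmDiff_Iio {α : Type*} [LinearOrder α] (a b : α) :
    Iio a ∆ Iio b = Ico (min a b) (max a b) := by
  ext x
  simp only [mem_symmDiff, mem_Iio, mem_Ico, min_le_iff, lt_max_iff]
  grind

theorem MeasureTheory.measureReal_symmDiff_eq_add_sub_inter {α : Type*} [MeasurableSpace α]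
    {μ : Measure α} [IsFiniteMeasure μ] {s t : Set α} (hs : MeasurableSet s)
    (ht : MeasurableSet t) :
    μ.real (s ∆ t) = μ.real s + μ.real t - 2 * μ.real (s ∩ t) := by
  rw [measureReal_symmDiff_eq hs ht, ← measureReal_sdiff_add_inter (s := s) ht,
    ← measureReal_sdiff_add_inter (s := t) hs, inter_comm t s]
  ring

section Tonelli

variable {α β : Type*} [MeasurableSpace α] [MeasurableSpace β] {μ : Measure α} {ν : Measure β}
  {s : Set (α × β)}

theorem MeasureTheory.integral_measureReal_prodMk_left [SFinite μ] [IsFiniteMeasure ν]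
    (hs : MeasurableSet s) :
    ∫ x, ν.real (Prod.mk x ⁻¹' s) ∂μ = (μ.prod ν).real s := by
  simp only [measureReal_def]
  rw [integral_toReal (measurable_measure_prodMk_left hs).aemeasurable
    (ae_of_all _ fun _ => measure_lt_top _ _), Measure.prod_apply hs]

theorem MeasureTheory.integral_measureReal_prodMk_right [IsFiniteMeasure μ] [SFinite ν]
    (hs : MeasurableSet s) :
    ∫ y, μ.real ((·, y) ⁻¹' s) ∂ν = (μ.prod ν).real s := by
  simp only [measureReal_def]
  rw [integral_toReal (measurable_measure_prodMk_right hs).aemeasurable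
    (ae_of_all _ fun _ => measure_lt_top _ _), Measure.prod_apply_symm hs]

end Tonelli

namespace ProbabilityTheory

variable {m : Measure ℝ} [IsProbabilityMeasure m]

theorem nullSingletonClass_of_continuous_cdf (hcont : Continuous (cdf m)) :
    NullSingletonClass m where
  measure_singleton x := by
    rw [← measure_cdf m, StieltjesFunction.measure_singleton,
      hcont.continuousWithinAt.leftLim_eq, sub_self, ENNReal.ofReal_zero]

theorem measureReal_Ico_eq_cdf_sub [NullSingletonClass m] {a b : ℝ} (hab : a ≤ b) :
    m.real (Ico a b) = cdf m b - cdf m a := by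
  rw [measureReal_congr Ico_ae_eq_Ioc, measureReal_def,
    ← ENNReal.toReal_ofReal (sub_nonneg.2 (monotone_cdf m hab)), ← StieltjesFunction.measure_Ioc,
    measure_cdf]

theorem measureReal_Iio_symmDiff_Iio_eq_abs_cdf_sub [NullSingletonClass m] (a b : ℝ) :
    m.real (Iio a ∆ Iio b) = |cdf m b - cdf m a| := by
  rw [Iio_symmDiff_Iio, measureReal_Ico_eq_cdf_sub min_le_max, (monotone_cdf m).map_max,
    (monotone_cdf m).map_min, max_sub_min_eq_abs]

end ProbabilityTheory

theorem stmt4 {Ω : Type*} [MeasurableSpace Ω] (P : Measure Ω) [IsProbabilityMeasure P]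
    (m : Measure ℝ) [IsProbabilityMeasure m]
    (F_U : ℝ → ℝ) (hF : ∀ x, F_U x = (m (Set.Iic x)).toReal) (hcont : Continuous F_U)
    (Y1 Y2 : Ω → ℝ) (hY1 : Measurable Y1) (hY2 : Measurable Y2) :
    ∫ u, ((P {ω | Y1 ω > u}).toReal + (P {ω | Y2 ω > u}).toReal
        - 2 * (P {ω | Y1 ω > u ∧ Y2 ω > u}).toReal) ∂m
      = ∫ ω, |F_U (Y2 ω) - F_U (Y1 ω)| ∂P := by
  obtain rfl : F_U = cdf m := funext fun x => (hF x).trans (cdf_eq_real m x).symm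
  have := nullSingletonClass_of_continuous_cdf hcont
  set s : Set (ℝ × Ω) := {p | p.1 < Y1 p.2} ∆ {p | p.1 < Y2 p.2}
  have hs : MeasurableSet s :=
    (measurableSet_lt measurable_fst (hY1.comp measurable_snd)).symmDiff
      (measurableSet_lt measurable_fst (hY2.comp measurable_snd))
  calc _ = ∫ u, P.real (Prod.mk u ⁻¹' s) ∂m := integral_congr_ae (ae_of_all _ fun u =>
        (measureReal_symmDiff_eq_add_sub_inter (measurableSet_lt measurable_const hY1)
          (measurableSet_lt measurable_const hY2)).symm)
    _ = ∫ ω, m.real ((·, ω) ⁻¹' s) ∂P := by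
      rw [integral_measureReal_prodMk_left hs, integral_measureReal_prodMk_right hs]
    _ = _ := integral_congr_ae (ae_of_all _ fun ω =>
      measureReal_Iio_symmDiff_Iio_eq_abs_cdf_sub (Y1 ω) (Y2 ω))
end

section
/- Let m be a probability measure on ℝ and S ⊆ ℝ. If the c.d.f. F_U of m is strictly increasing on S, then E_m(Y1,Y2) := E|F_U(Y2-) - F_U(Y1-)| defines a metric on the space of random variables with values in S almost surely (identifying a.s. equal random variables): it is symmetric, satisfies the triangle inequality, and E_m(Y1,Y2)=0 implies Y1=Y2 almost surely. -/
/-!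
`E_m(Y₁, Y₂)` is the L¹ distance between `F_U ∘ Y₁` and `F_U ∘ Y₂`, which are integrable because
`F_U x = m (Iio x)` is monotone (hence measurable) and bounded. Symmetry and the triangle inequality
are those of the L¹ distance; if it vanishes, `F_U ∘ Y₁ = F_U ∘ Y₂` a.s., and injectivity of `F_U`
on `S` turns this into `Y₁ = Y₂` a.s.
-/

open MeasureTheory Set

section L1Distance

variable {Ω : Type*} [MeasurableSpace Ω] {P : Measure Ω} {g₁ g₂ g₃ : Ω → ℝ}

theorem integral_abs_sub_le_add (h₁ : Integrable g₁ P) (h₂ : Integrable g₂ P)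
    (h₃ : Integrable g₃ P) :
    ∫ ω, |g₂ ω - g₁ ω| ∂P ≤ ∫ ω, |g₃ ω - g₁ ω| ∂P + ∫ ω, |g₂ ω - g₃ ω| ∂P := by
  have hdist {f g : Ω → ℝ} (hf : Integrable f P) (hg : Integrable g P) :
      Integrable (fun ω => |f ω - g ω|) P := (hf.sub hg).abs
  rw [← integral_add (hdist h₃ h₁) (hdist h₂ h₃)]
  exact integral_mono (hdist h₂ h₁) ((hdist h₃ h₁).add (hdist h₂ h₃))
    fun ω => (abs_sub_le _ _ _).trans_eq (add_comm _ _)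

theorem ae_eq_of_integral_abs_sub_eq_zero (h₁ : Integrable g₁ P) (h₂ : Integrable g₂ P)
    (h : ∫ ω, |g₂ ω - g₁ ω| ∂P = 0) : g₁ =ᵐ[P] g₂ := by
  filter_upwards [(integral_eq_zero_iff_of_nonneg (fun _ => abs_nonneg _) (h₂.sub h₁).abs).mp h]
    with ω hω
  exact (sub_eq_zero.mp (abs_eq_zero.mp hω)).symm

end L1Distance

section LeftCDF

variable (m : Measure ℝ) [IsFiniteMeasure m]

theorem monotone_measureReal_Iio : Monotone fun x => m.real (Iio x) :=
  fun _ _ hxy => measureReal_mono (Iio_subset_Iio hxy)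

theorem integrable_measureReal_Iio_comp {Ω : Type*} [MeasurableSpace Ω] {P : Measure Ω}
    [IsFiniteMeasure P] {Y : Ω → ℝ} (hY : Measurable Y) :
    Integrable (fun ω => m.real (Iio (Y ω))) P := by
  refine Integrable.of_bound ((monotone_measureReal_Iio m).measurable.comp hY).aestronglyMeasurable
    (m.real univ) (ae_of_all _ fun ω => ?_)
  rw [Real.norm_of_nonneg measureReal_nonneg]
  exact measureReal_mono (subset_univ _)

end LeftCDF

theorem stmt5 {Ω : Type*} [MeasurableSpace Ω] (P : Measure Ω) [IsProbabilityMeasure P]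
    (m : Measure ℝ) [IsProbabilityMeasure m] (S : Set ℝ)
    (F_U : ℝ → ℝ) (hF : ∀ x, F_U x = (m (Set.Iio x)).toReal)
    (hmono : StrictMonoOn F_U S)
    (Y1 Y2 : Ω → ℝ) (hY1 : Measurable Y1) (hY2 : Measurable Y2)
    (hS1 : ∀ᵐ ω ∂P, Y1 ω ∈ S) (hS2 : ∀ᵐ ω ∂P, Y2 ω ∈ S) :
    (∫ ω, |F_U (Y2 ω) - F_U (Y1 ω)| ∂P = ∫ ω, |F_U (Y1 ω) - F_U (Y2 ω)| ∂P) ∧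
    (∀ Y3 : Ω → ℝ, Measurable Y3 →
      ∫ ω, |F_U (Y2 ω) - F_U (Y1 ω)| ∂P
        ≤ ∫ ω, |F_U (Y3 ω) - F_U (Y1 ω)| ∂P + ∫ ω, |F_U (Y2 ω) - F_U (Y3 ω)| ∂P) ∧
    (∫ ω, |F_U (Y2 ω) - F_U (Y1 ω)| ∂P = 0 → Y1 =ᵐ[P] Y2) := by
  obtain rfl : F_U = fun x => m.real (Iio x) := funext hF
  have hint {Y : Ω → ℝ} (hY : Measurable Y) : Integrable (fun ω => m.real (Iio (Y ω))) P :=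
    integrable_measureReal_Iio_comp m hY
  refine ⟨by simp_rw [abs_sub_comm],
    fun Y3 hY3 => integral_abs_sub_le_add (hint hY1) (hint hY2) (hint hY3), fun h => ?_⟩
  filter_upwards [ae_eq_of_integral_abs_sub_eq_zero (hint hY1) (hint hY2) h, hS1, hS2]
    with ω hω h1 h2
  exact hmono.injOn h1 h2 hω
end

section
/- Let Y1, Y2 be identically distributed with common continuous, strictly increasing c.d.f. F1 and copula C. Then E_{F1}(Y1,Y2) := E|F1(Y2)-F1(Y1)| equals 1 - 2∫_0^1 C(x,x) dx. -/
/-!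
For `[0,1]`-valued `U`, `V` one has `|V - U| = 2 max U V - U - V`, and the layer-cake formula
`E W = 1 - ∫₀¹ P(W ≤ x) dx` turns each of the three expectations into an integral of a
distribution function, with `P(max U V ≤ x) = P(U ≤ x, V ≤ x)`. For `U = F1 ∘ Y1`, `V = F1 ∘ Y2`,
strict monotonicity of `F1` and the fact that a continuous c.d.f. takes every value in `(0,1)` give
`P(U ≤ x) = P(V ≤ x) = x` and `P(U ≤ x, V ≤ x) = C x x` for `0 < x < 1`.
-/

open MeasureTheory ProbabilityTheory Set

section

variable {Ω : Type*} [MeasurableSpace Ω] {P : Measure Ω} [IsProbabilityMeasure P]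

theorem integral_eq_one_sub_intervalIntegral_measureReal_le {W : Ω → ℝ} (hW : AEMeasurable W P)
    (hW01 : ∀ᵐ ω ∂P, W ω ∈ Icc 0 1) :
    ∫ ω, W ω ∂P = 1 - ∫ x in (0:ℝ)..1, P.real {ω | W ω ≤ x} := by
  have hmono : Monotone fun x => P.real {ω | W ω ≤ x} :=
    fun x y hxy => measureReal_mono fun ω hω => le_trans hω hxy
  have hlt : ∀ x, P.real {ω | x < W ω} = 1 - P.real {ω | W ω ≤ x} := fun x => by
    simpa only [compl_ofPred, not_le] using
      probReal_compl_eq_one_sub₀ (nullMeasurableSet_le hW aemeasurable_const)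
  calc ∫ ω, W ω ∂P = ∫ x in (0:ℝ)..1, P.real {ω | x ≤ W ω} := by
        rw [(Integrable.of_mem_Icc 0 1 hW hW01).integral_eq_integral_Ioc_meas_le (M := 1)
          (hW01.mono fun _ h => h.1) (hW01.mono fun _ h => h.2),
          intervalIntegral.integral_of_le zero_le_one]
    _ = ∫ x in (0:ℝ)..1, P.real {ω | x < W ω} := by
        refine intervalIntegral.integral_congr_ae ?_
        filter_upwards [meas_le_ae_eq_meas_lt P volume W] with x hx _
        exact congrArg ENNReal.toReal hx
    _ = 1 - ∫ x in (0:ℝ)..1, P.real {ω | W ω ≤ x} := by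
        simp only [hlt]
        rw [intervalIntegral.integral_sub intervalIntegrable_const hmono.intervalIntegrable]
        simp

theorem integral_abs_sub_eq_intervalIntegral_measureReal {U V : Ω → ℝ} (hU : AEMeasurable U P)
    (hV : AEMeasurable V P) (hU01 : ∀ᵐ ω ∂P, U ω ∈ Icc 0 1) (hV01 : ∀ᵐ ω ∂P, V ω ∈ Icc 0 1) :
    ∫ ω, |V ω - U ω| ∂P = (∫ x in (0:ℝ)..1, P.real {ω | U ω ≤ x})
      + (∫ x in (0:ℝ)..1, P.real {ω | V ω ≤ x})
      - 2 * ∫ x in (0:ℝ)..1, P.real {ω | U ω ≤ x ∧ V ω ≤ x} := by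
  have hmax01 : ∀ᵐ ω ∂P, max (U ω) (V ω) ∈ Icc 0 1 := by
    filter_upwards [hU01, hV01] with ω hUω hVω
    exact ⟨le_max_of_le_left hUω.1, max_le hUω.2 hVω.2⟩
  have hmax : AEMeasurable (fun ω => max (U ω) (V ω)) P := hU.max hV
  have hUint := Integrable.of_mem_Icc 0 1 hU hU01
  have hVint := Integrable.of_mem_Icc 0 1 hV hV01
  have hmaxint := Integrable.of_mem_Icc 0 1 hmax hmax01
  calc ∫ ω, |V ω - U ω| ∂P = ∫ ω, (2 * max (U ω) (V ω) - U ω - V ω) ∂P := by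
        congr 1 with ω
        rw [← max_sub_min_eq_abs', max_comm, min_comm]
        linarith [min_add_max (U ω) (V ω)]
    _ = 2 * ∫ ω, max (U ω) (V ω) ∂P - ∫ ω, U ω ∂P - ∫ ω, V ω ∂P := by
        rw [integral_sub _ hVint, integral_sub (hmaxint.const_mul 2) hUint, integral_const_mul]
        exact (hmaxint.const_mul 2).sub hUint
    _ = _ := by
        simp only [integral_eq_one_sub_intervalIntegral_measureReal_le hmax hmax01,
          integral_eq_one_sub_intervalIntegral_measureReal_le hU hU01,
          integral_eq_one_sub_intervalIntegral_measureReal_le hV hV01, max_le_iff]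
        ring

end

open Filter in
theorem ProbabilityTheory.Ioo_subset_range_cdf {μ : Measure ℝ} [IsProbabilityMeasure μ]
    (hμ : Continuous (cdf μ)) : Ioo 0 1 ⊆ range (cdf μ) := fun _ hx =>
  mem_range_of_exists_le_of_exists_ge hμ
    (((tendsto_cdf_atBot μ).eventually (eventually_lt_nhds hx.1)).exists.imp fun _ => le_of_lt)
    (((tendsto_cdf_atTop μ).eventually (eventually_gt_nhds hx.2)).exists.imp fun _ => le_of_lt)

theorem stmt10 {Ω : Type*} [MeasurableSpace Ω] (P : Measure Ω) [IsProbabilityMeasure P]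
    (Y1 Y2 : Ω → ℝ) (hY1 : Measurable Y1) (hY2 : Measurable Y2)
    (F1 : ℝ → ℝ) (C : ℝ → ℝ → ℝ)
    (hF1 : ∀ x, F1 x = (P {ω | Y1 ω ≤ x}).toReal)
    (hid : ∀ x, (P {ω | Y2 ω ≤ x}).toReal = F1 x)
    (hF1c : Continuous F1) (hmono : StrictMono F1)
    (hSklar : ∀ s t, (P {ω | Y1 ω ≤ s ∧ Y2 ω ≤ t}).toReal = C (F1 s) (F1 t)) :
    ∫ ω, |F1 (Y2 ω) - F1 (Y1 ω)| ∂P = 1 - 2 * ∫ x in (0:ℝ)..1, C x x := by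
  have := Measure.isProbabilityMeasure_map (μ := P) hY1.aemeasurable
  have hcdf : F1 = cdf (P.map Y1) := by
    ext x
    rw [cdf_eq_real, map_measureReal_apply hY1 measurableSet_Iic, hF1]
    rfl
  have hF01 : ∀ y, F1 y ∈ Icc 0 1 := fun y =>
    hcdf ▸ ⟨cdf_nonneg _ y, cdf_le_one _ y⟩
  have hrange : Ioo 0 1 ⊆ range F1 := hcdf ▸ Ioo_subset_range_cdf (hcdf ▸ hF1c)
  have hlaw : ∀ x ∈ Ioo (0:ℝ) 1, P.real {ω | F1 (Y1 ω) ≤ x} = x ∧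
      P.real {ω | F1 (Y2 ω) ≤ x} = x ∧ P.real {ω | F1 (Y1 ω) ≤ x ∧ F1 (Y2 ω) ≤ x} = C x x := by
    intro x hx
    obtain ⟨s, rfl⟩ := hrange hx
    simp only [hmono.le_iff_le]
    exact ⟨(hF1 s).symm, hid s, hSklar s s⟩
  have hU1 : Measurable fun ω => F1 (Y1 ω) := hF1c.measurable.comp hY1
  have hU2 : Measurable fun ω => F1 (Y2 ω) := hF1c.measurable.comp hY2
  rw [integral_abs_sub_eq_intervalIntegral_measureReal hU1.aemeasurable hU2.aemeasurable
      (ae_of_all _ fun _ => hF01 _) (ae_of_all _ fun _ => hF01 _),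
    intervalIntegral.integral_congr_Ioo_of_le zero_le_one fun x hx => (hlaw x hx).1,
    intervalIntegral.integral_congr_Ioo_of_le zero_le_one fun x hx => (hlaw x hx).2.1,
    intervalIntegral.integral_congr_Ioo_of_le zero_le_one fun x hx => (hlaw x hx).2.2, integral_id]
  norm_num
end

section
/- Let Y1 have continuous c.d.f. F1 symmetric about μ ∈ ℝ in the sense that F1(x) = 1 - F1(μ - x) for all x, and let Y2 = μ - Y1 (so Y1 + Y2 = μ a.s.). Then Y2 has the same distribution as Y1 and the Gini distance G(Y1,Y2) = E|F1(Y1) - F1(Y2)| attains the maximal value 1/2. -/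
/-!
Continuity of `F1` means the law of `Y1` has no atoms, so
`P(μ - Y1 ≤ x) = 1 - F1 (μ - x) = F1 x`. By the symmetry of `F1`, `F1 (μ - Y1) = 1 - F1 Y1`, so
the Gini distance is `E|2U - 1|` with `U = F1 Y1`. By the probability integral transform `U` is
uniform on `[0, 1]`, and `∫₀¹ |2u - 1| du = 1/2`.
-/

open MeasureTheory Set Filter Topology ProbabilityTheory intervalIntegral

namespace ProbabilityTheory

variable {ν : Measure ℝ} [IsProbabilityMeasure ν]

lemma measure_Ici_eq_one_sub_cdf (hc : Continuous (cdf ν)) (a : ℝ) :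
    ν (Ici a) = ENNReal.ofReal (1 - cdf ν a) := by
  rw [← measure_cdf ν, StieltjesFunction.measure_Ici _ (tendsto_cdf_atTop ν),
    hc.continuousWithinAt.leftLim_eq, measure_cdf]

/-- For `0 < u < 1` the sublevel set `{cdf ν ≤ u}` is `Iic x₀` with `cdf ν x₀ = u`,
where `x₀` is its supremum. -/
lemma measure_cdf_preimage_Iic_of_pos (hc : Continuous (cdf ν)) {u : ℝ} (hu0 : 0 < u)
    (hu1 : u < 1) : ν (cdf ν ⁻¹' Iic u) = ENNReal.ofReal u := by
  set S := cdf ν ⁻¹' Iic u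
  obtain ⟨a, ha⟩ := ((tendsto_cdf_atBot ν).eventually (eventually_lt_nhds hu0)).exists
  obtain ⟨b, hb⟩ :=
    eventually_atTop.1 ((tendsto_cdf_atTop ν).eventually (eventually_gt_nhds hu1))
  have hbdd : BddAbove S := ⟨b, fun x hx => le_of_not_gt fun hbx => (hb x hbx.le).not_ge hx⟩
  have hmem : sSup S ∈ S := (isClosed_Iic.preimage hc).csSup_mem ⟨a, ha.le⟩ hbdd
  have hS : S = Iic (sSup S) :=
    Subset.antisymm (fun x hx => le_csSup hbdd hx) fun x hx => (monotone_cdf ν hx).trans hmem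
  obtain ⟨z, hz⟩ :=
    mem_range_of_exists_le_of_exists_ge hc ⟨a, ha.le⟩ ⟨b, (hb b le_rfl).le⟩
  have hsup : cdf ν (sSup S) = u :=
    le_antisymm hmem (hz ▸ monotone_cdf ν (le_csSup hbdd (show z ∈ S from hz.le)))
  rw [hS, ← ofReal_cdf, hsup]

lemma measure_cdf_preimage_Iic_zero (hc : Continuous (cdf ν)) : ν (cdf ν ⁻¹' Iic 0) = 0 := by
  have hlim : Tendsto ENNReal.ofReal (𝓝[>] 0) (𝓝 0) := by
    simpa using (ENNReal.continuous_ofReal.tendsto 0).mono_left nhdsWithin_le_nhds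
  refine nonpos_iff_eq_zero.1 (ge_of_tendsto hlim ?_)
  filter_upwards [Ioo_mem_nhdsGT one_pos] with ε hε
  exact (measure_mono fun x hx => le_trans hx hε.1.le).trans
    (measure_cdf_preimage_Iic_of_pos hc hε.1 hε.2).le

theorem map_cdf_eq_restrict_Icc (hc : Continuous (cdf ν)) :
    ν.map (cdf ν) = volume.restrict (Icc 0 1) := by
  refine Measure.ext_of_Iic _ _ fun u => ?_
  have hI : Iic u ∩ Icc 0 1 = Icc 0 (min u 1) := by
    ext; simp only [mem_inter_iff, mem_Iic, mem_Icc, le_min_iff]; tauto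
  rw [Measure.map_apply hc.measurable measurableSet_Iic, Measure.restrict_apply measurableSet_Iic,
    hI, Real.volume_Icc, sub_zero]
  rcases le_or_gt u 0 with hu0 | hu0
  · rw [measure_mono_null (preimage_mono (Iic_subset_Iic.2 hu0))
        (measure_cdf_preimage_Iic_zero hc),
      ENNReal.ofReal_of_nonpos (min_le_of_left_le hu0)]
  rcases lt_or_ge u 1 with hu1 | hu1
  · rw [measure_cdf_preimage_Iic_of_pos hc hu0 hu1, min_eq_left hu1.le]
  · rw [(eq_univ_of_forall fun x => (cdf_le_one ν x).trans hu1 : cdf ν ⁻¹' Iic u = univ),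
      measure_univ, min_eq_right hu1, ENNReal.ofReal_one]

lemma cdf_map_eq {Ω : Type*} [MeasurableSpace Ω] {P : Measure Ω} [IsProbabilityMeasure P]
    {X : Ω → ℝ} (hX : Measurable X) {F : ℝ → ℝ}
    (hF : ∀ x, F x = (P {ω | X ω ≤ x}).toReal) :
    ⇑(cdf (P.map X)) = F := by
  have := Measure.isProbabilityMeasure_map (μ := P) hX.aemeasurable
  funext x
  rw [cdf_eq_real, map_measureReal_apply hX measurableSet_Iic, hF]
  rfl

end ProbabilityTheory

lemma integral_Icc_abs_two_mul_sub_one : ∫ x in Icc (0 : ℝ) 1, |2 * x - 1| = 1 / 2 := by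
  have hpos : ∫ x in (0 : ℝ)..1, |x| = 1 / 2 := by
    rw [integral_congr (g := fun x => x)
      fun x hx => abs_of_nonneg (uIcc_of_le (zero_le_one (α := ℝ)) ▸ hx).1]
    norm_num
  have hneg : ∫ x in (-1 : ℝ)..0, |x| = 1 / 2 := by
    simpa [hpos] using integral_comp_neg (a := -1) (b := 0) fun x : ℝ => |x|
  rw [integral_Icc_eq_integral_Ioc, ← integral_of_le zero_le_one,
    integral_comp_mul_sub (fun x => |x|) two_ne_zero, smul_eq_mul,
    ← integral_add_adjacent_intervals (b := 0) (continuous_abs.intervalIntegrable _ _)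
      (continuous_abs.intervalIntegrable _ _)]
  norm_num [hpos, hneg]

theorem stmt13_general {Ω : Type*} [MeasurableSpace Ω] (P : Measure Ω) [IsProbabilityMeasure P]
    (Y1 : Ω → ℝ) (hY1 : Measurable Y1) (μ : ℝ)
    (F1 : ℝ → ℝ)
    (hF1 : ∀ x, F1 x = (P {ω | Y1 ω ≤ x}).toReal)
    (hF1c : Continuous F1)
    (hsymm : ∀ x, F1 x = 1 - F1 (μ - x)) :
    (∀ x, (P {ω | μ - Y1 ω ≤ x}).toReal = F1 x) ∧
    ∫ ω, |F1 (Y1 ω) - F1 (μ - Y1 ω)| ∂P = 1/2 := by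
  set ν := P.map Y1
  have : IsProbabilityMeasure ν := Measure.isProbabilityMeasure_map hY1.aemeasurable
  have hcdf : ⇑(cdf ν) = F1 := cdf_map_eq hY1 hF1
  have hc : Continuous (cdf ν) := hcdf ▸ hF1c
  refine ⟨fun x => ?_, ?_⟩
  · have hset : {ω | μ - Y1 ω ≤ x} = Y1 ⁻¹' Ici (μ - x) := by
      ext; exact sub_le_comm (b := Y1 _)
    rw [hset, ← Measure.map_apply hY1 measurableSet_Ici, measure_Ici_eq_one_sub_cdf hc, hcdf,
      ← hsymm, ENNReal.toReal_ofReal (hcdf ▸ cdf_nonneg ν x)]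
  · calc ∫ ω, |F1 (Y1 ω) - F1 (μ - Y1 ω)| ∂P = ∫ ω, |2 * cdf ν (Y1 ω) - 1| ∂P := by
          congr with ω
          rw [hcdf]
          congr 1
          linarith [hsymm (Y1 ω)]
      _ = ∫ u, |2 * u - 1| ∂(ν.map (cdf ν)) := by
          rw [integral_map hc.measurable.aemeasurable (by fun_prop),
            integral_map hY1.aemeasurable (by fun_prop)]
      _ = 1 / 2 := by rw [map_cdf_eq_restrict_Icc hc, integral_Icc_abs_two_mul_sub_one]

theorem stmt13 {Ω : Type*} [MeasurableSpace Ω] (P : Measure Ω) [IsProbabilityMeasure P]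
    (Y1 : Ω → ℝ) (hY1 : Measurable Y1) (μ : ℝ)
    (F1 : ℝ → ℝ)
    (hF1 : ∀ x, F1 x = (P {ω | Y1 ω ≤ x}).toReal)
    (hF1c : Continuous F1) (hmono : StrictMono F1)
    (hsymm : ∀ x, F1 x = 1 - F1 (μ - x)) :
    (∀ x, (P {ω | μ - Y1 ω ≤ x}).toReal = F1 x) ∧
    ∫ ω, |F1 (Y1 ω) - F1 (μ - Y1 ω)| ∂P = 1/2 :=
  stmt13_general P Y1 hY1 μ F1 hF1 hF1c hsymm
end

section
/- Let Y1 be a random variable with values in [0,1] with c.d.f. F_{Y1}, let Y be an independent copy of Y1, and let Y2 ~ U(0,1). Then the squared 2-Wasserstein distance between the laws of Y1 and Y2 equals 1/3 + E[Y1²] - E[Y1 ∨ Y], where Y1 ∨ Y = max(Y1, Y). -/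
/-! Let `q` be the quantile function of the law `μ` of `Y1`. Under the uniform measure on `(0, 1)`,
`q` has law `μ`, so `∫ (q x - x)² = E[Y1²] - 2 ∫ x q(x) dx + 1/3`. For independent uniforms
`U, V`, the pair `(q U, q V)` has the law of `(Y1, Y)`, and since `q` is monotone,
`E[max (q U) (q V)] = E[q U; V < U] + E[q V; U ≤ V] = 2 ∫ x q(x) dx`. -/

open MeasureTheory Set Filter Topology

theorem AEMeasurable.prodMap {α β γ δ : Type*} [MeasurableSpace α] [MeasurableSpace β]
    [MeasurableSpace γ] [MeasurableSpace δ] {f : α → β} {g : γ → δ} {μa : Measure α}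
    {μc : Measure γ} [SFinite μc] (hf : AEMeasurable f μa) (hg : AEMeasurable g μc) :
    AEMeasurable (Prod.map f g) (μa.prod μc) :=
  (hf.comp_quasiMeasurePreserving Measure.quasiMeasurePreserving_fst).prodMk
    (hg.comp_quasiMeasurePreserving Measure.quasiMeasurePreserving_snd)

theorem MeasureTheory.Measure.map_prod_map_of_aemeasurable {α β γ δ : Type*}
    [MeasurableSpace α] [MeasurableSpace β] [MeasurableSpace γ] [MeasurableSpace δ]
    {f : α → β} {g : γ → δ} (μa : Measure α) (μc : Measure γ) [SFinite μa] [SFinite μc]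
    (hf : AEMeasurable f μa) (hg : AEMeasurable g μc) :
    (μa.map f).prod (μc.map g) = (μa.prod μc).map (Prod.map f g) := by
  rw [Measure.map_congr hf.ae_eq_mk, Measure.map_congr hg.ae_eq_mk,
    Measure.map_prod_map _ _ hf.measurable_mk hg.measurable_mk]
  exact Measure.map_congr ((Measure.quasiMeasurePreserving_fst.ae_eq hf.ae_eq_mk).prodMk
    (Measure.quasiMeasurePreserving_snd.ae_eq hg.ae_eq_mk)).symm

instance isProbabilityMeasure_volume_restrict_Ioo_zero_one :
    IsProbabilityMeasure (volume.restrict (Ioo (0:ℝ) 1)) := ⟨by simp⟩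

lemma restrict_Ioo_zero_one_Iio {u : ℝ} (hu : u ∈ Icc (0:ℝ) 1) :
    volume.restrict (Ioo 0 1) (Iio u) = ENNReal.ofReal u := by
  simp [Measure.restrict_apply' measurableSet_Ioo, Iio_inter_Ioo, hu.2]

lemma restrict_Ioo_zero_one_Iic {u : ℝ} (hu : u ∈ Icc (0:ℝ) 1) :
    volume.restrict (Ioo 0 1) (Iic u) = ENNReal.ofReal u := by
  rw [measure_congr Iio_ae_eq_Iic.symm, restrict_Ioo_zero_one_Iio hu]

lemma integral_max_comp_prod_volume_Ioo {f : ℝ → ℝ} (hmono : MonotoneOn f (Ioo 0 1))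
    (hf : Integrable f (volume.restrict (Ioo 0 1))) :
    ∫ p, max (f p.1) (f p.2) ∂((volume.restrict (Ioo 0 1)).prod (volume.restrict (Ioo 0 1)))
      = 2 * ∫ x in Ioo 0 1, x * f x := by
  set ν := volume.restrict (Ioo (0:ℝ) 1)
  set A := {p : ℝ × ℝ | p.2 < p.1}
  set B := {p : ℝ × ℝ | p.1 ≤ p.2}
  have hA : MeasurableSet A := measurableSet_lt measurable_snd measurable_fst
  have hB : MeasurableSet B := measurableSet_le measurable_fst measurable_snd
  have hsplit : (fun p : ℝ × ℝ => max (f p.1) (f p.2))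
      =ᵐ[ν.prod ν] A.indicator (fun p => f p.1) + B.indicator (fun p => f p.2) := by
    have hmem : ∀ᵐ p ∂(ν.prod ν), p.1 ∈ Ioo (0:ℝ) 1 ∧ p.2 ∈ Ioo (0:ℝ) 1 :=
      (Measure.quasiMeasurePreserving_fst.ae (ae_restrict_mem measurableSet_Ioo)).and
        (Measure.quasiMeasurePreserving_snd.ae (ae_restrict_mem measurableSet_Ioo))
    filter_upwards [hmem] with p ⟨h1, h2⟩
    rcases lt_or_ge p.2 p.1 with hlt | hle
    · simp [A, B, hlt, hlt.not_ge, hmono h2 h1 hlt.le]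
    · simp [A, B, hle, hle.not_gt, hmono h1 h2 hle]
  have hintA : Integrable (A.indicator fun p => f p.1) (ν.prod ν) := (hf.comp_fst ν).indicator hA
  have hintB : Integrable (B.indicator fun p => f p.2) (ν.prod ν) := (hf.comp_snd ν).indicator hB
  have hA_int : ∫ p, A.indicator (fun p => f p.1) p ∂(ν.prod ν) = ∫ x, x * f x ∂ν := by
    rw [integral_prod _ hintA]
    refine setIntegral_congr_fun measurableSet_Ioo fun u hu => ?_
    change ∫ v, (Iio u).indicator (fun _ => f u) v ∂ν = u * f u
    rw [integral_indicator_const _ measurableSet_Iio, measureReal_def,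
      restrict_Ioo_zero_one_Iio (Ioo_subset_Icc_self hu), ENNReal.toReal_ofReal hu.1.le,
      smul_eq_mul]
  have hB_int : ∫ p, B.indicator (fun p => f p.2) p ∂(ν.prod ν) = ∫ x, x * f x ∂ν := by
    rw [integral_prod_symm _ hintB]
    refine setIntegral_congr_fun measurableSet_Ioo fun v hv => ?_
    change ∫ u, (Iic v).indicator (fun _ => f v) u ∂ν = v * f v
    rw [integral_indicator_const _ measurableSet_Iic, measureReal_def,
      restrict_Ioo_zero_one_Iic (Ioo_subset_Icc_self hv), ENNReal.toReal_ofReal hv.1.le,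
      smul_eq_mul]
  rw [integral_congr_ae hsplit, integral_add' hintA hintB, hA_int, hB_int, two_mul]

namespace ProbabilityTheory

/-- Meaningful only for `x ∈ (0, 1)`: for `x ≤ 0` the set is `ℝ` and `sInf` returns `0`. -/
noncomputable def quantile (μ : Measure ℝ) (x : ℝ) : ℝ := sInf {y | x ≤ cdf μ y}

variable {μ : Measure ℝ} {x : ℝ}

lemma bddBelow_setOf_le_cdf (hx : 0 < x) : BddBelow {y | x ≤ cdf μ y} := by
  obtain ⟨a, ha⟩ := eventually_atBot.1 ((tendsto_order.1 (tendsto_cdf_atBot μ)).2 x hx)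
  exact ⟨a, fun y hy => not_lt.1 fun hya => (ha y hya.le).not_ge hy⟩

lemma nonempty_setOf_le_cdf (hx : x < 1) : {y | x ≤ cdf μ y}.Nonempty :=
  ((tendsto_order.1 (tendsto_cdf_atTop μ)).1 x hx).exists.imp fun _ hy => hy.le

lemma le_cdf_quantile (hx : x ∈ Ioo 0 1) : x ≤ cdf μ (quantile μ x) := by
  rw [← (cdf μ).iInf_Ioi_eq]
  refine le_ciInf fun r => ?_
  obtain ⟨y, hy, hyr⟩ := exists_lt_of_csInf_lt (nonempty_setOf_le_cdf hx.2) r.2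
  exact hy.trans (monotone_cdf μ hyr.le)

lemma quantile_le_iff (hx : x ∈ Ioo 0 1) {y : ℝ} : quantile μ x ≤ y ↔ x ≤ cdf μ y :=
  ⟨fun h => (le_cdf_quantile hx).trans (monotone_cdf μ h),
    fun h => csInf_le (bddBelow_setOf_le_cdf hx.1) h⟩

lemma monotoneOn_quantile : MonotoneOn (quantile μ) (Ioo 0 1) := fun _ hx _ hx' hxx' =>
  (quantile_le_iff hx).2 (hxx'.trans (le_cdf_quantile hx'))

lemma aemeasurable_quantile : AEMeasurable (quantile μ) (volume.restrict (Ioo 0 1)) :=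
  aemeasurable_restrict_of_monotoneOn measurableSet_Ioo monotoneOn_quantile

lemma map_quantile [IsProbabilityMeasure μ] :
    (volume.restrict (Ioo 0 1)).map (quantile μ) = μ := by
  have : IsProbabilityMeasure ((volume.restrict (Ioo (0:ℝ) 1)).map (quantile μ)) :=
    Measure.isProbabilityMeasure_map aemeasurable_quantile
  refine Measure.ext_of_Iic _ _ fun a => ?_
  rw [Measure.map_apply_of_aemeasurable aemeasurable_quantile measurableSet_Iic, ← ofReal_cdf,
    ← restrict_Ioo_zero_one_Iic ⟨cdf_nonneg μ a, cdf_le_one μ a⟩]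
  refine measure_congr ?_
  filter_upwards [ae_restrict_mem measurableSet_Ioo] with x hx
  exact propext (quantile_le_iff hx)

lemma integral_quantile_sub_sq [IsProbabilityMeasure μ] (hμ : MemLp id 2 μ) :
    ∫ x in Ioo 0 1, (quantile μ x - x) ^ 2
      = 1 / 3 + ∫ y, y ^ 2 ∂μ - ∫ p, max p.1 p.2 ∂(μ.prod μ) := by
  set ν := volume.restrict (Ioo (0:ℝ) 1)
  have hmap : ν.map (quantile μ) = μ := map_quantile
  have hq : MemLp (quantile μ) 2 ν := by
    rw [← hmap] at hμ
    exact (memLp_map_measure_iff aestronglyMeasurable_id aemeasurable_quantile).1 hμ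
  have hq1 : Integrable (quantile μ) ν := hq.integrable one_le_two
  have hq2 : Integrable (fun x => quantile μ x ^ 2) ν := hq.integrable_sq
  have hxq : Integrable (fun x => x * quantile μ x) ν := by
    refine hq1.bdd_mul (c := 1) aestronglyMeasurable_id ?_
    filter_upwards [ae_restrict_mem measurableSet_Ioo] with x hx
    rw [Real.norm_eq_abs, abs_le]
    exact ⟨by linarith [hx.1], hx.2.le⟩
  have hx2 : Integrable (fun x : ℝ => x ^ 2) ν :=
    (continuous_pow 2).integrableOn_Icc.mono_set Ioo_subset_Icc_self
  have hmoment : ∫ x, quantile μ x ^ 2 ∂ν = ∫ y, y ^ 2 ∂μ := by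
    conv_rhs => rw [← hmap]
    exact (integral_map aemeasurable_quantile (continuous_pow 2).aestronglyMeasurable).symm
  have hmax : ∫ p, max p.1 p.2 ∂(μ.prod μ) = 2 * ∫ x, x * quantile μ x ∂ν := by
    rw [← integral_max_comp_prod_volume_Ioo monotoneOn_quantile hq1]
    conv_lhs => rw [← hmap, Measure.map_prod_map_of_aemeasurable _ _ aemeasurable_quantile
      aemeasurable_quantile]
    exact integral_map (aemeasurable_quantile.prodMap aemeasurable_quantile)
      (continuous_fst.max continuous_snd).aestronglyMeasurable
  have hsq : ∫ x, x ^ 2 ∂ν = 1 / 3 := by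
    rw [← integral_Ioc_eq_integral_Ioo, ← intervalIntegral.integral_of_le zero_le_one,
      integral_pow]
    norm_num
  calc ∫ x, (quantile μ x - x) ^ 2 ∂ν
      = ∫ x, (quantile μ x ^ 2 - 2 * (x * quantile μ x) + x ^ 2) ∂ν := by
        congr 1; ext x; ring
    _ = (∫ x, quantile μ x ^ 2 ∂ν) - 2 * (∫ x, x * quantile μ x ∂ν)
          + ∫ x, x ^ 2 ∂ν := by
        rw [integral_add _ hx2, integral_sub hq2 (hxq.const_mul 2), integral_const_mul]
        exact hq2.sub (hxq.const_mul 2)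
    _ = 1 / 3 + ∫ y, y ^ 2 ∂μ - ∫ p, max p.1 p.2 ∂(μ.prod μ) := by
        rw [hmoment, hmax, hsq]; ring

end ProbabilityTheory

open ProbabilityTheory in
theorem stmt14 {Ω : Type*} [MeasurableSpace Ω] (P : Measure Ω) [IsProbabilityMeasure P]
    (Y1 Y : Ω → ℝ) (hY1 : Measurable Y1) (hY : Measurable Y)
    (hrange : ∀ᵐ ω ∂P, Y1 ω ∈ Set.Icc (0:ℝ) 1)
    (hcopy : Measure.map Y P = Measure.map Y1 P)
    (hindep : ProbabilityTheory.IndepFun Y1 Y P)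
    (F : ℝ → ℝ) (hF : ∀ y, F y = (P {ω | Y1 ω ≤ y}).toReal)
    (Q : ℝ → ℝ) (hQ : ∀ x ∈ Set.Ioo (0:ℝ) 1, Q x = sInf {y : ℝ | x ≤ F y}) :
    ∫ x in (0:ℝ)..1, (Q x - x)^2
      = 1/3 + ∫ ω, (Y1 ω)^2 ∂P - ∫ ω, max (Y1 ω) (Y ω) ∂P := by
  set μ := P.map Y1
  have : IsProbabilityMeasure μ := Measure.isProbabilityMeasure_map hY1.aemeasurable
  have hFμ : F = cdf μ := funext fun y => by
    rw [hF, cdf_eq_real, map_measureReal_apply hY1 measurableSet_Iic]; rfl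
  have hQμ : EqOn Q (quantile μ) (Ioo 0 1) := fun x hx => by rw [hQ x hx, quantile, hFμ]
  have hL2 : MemLp id 2 μ := by
    refine (memLp_map_measure_iff aestronglyMeasurable_id hY1.aemeasurable).2 ?_
    refine MemLp.of_bound hY1.aestronglyMeasurable 1 (hrange.mono fun ω hω => ?_)
    exact (Real.norm_eq_abs (Y1 ω)).trans_le (abs_le.2 ⟨by linarith [hω.1], hω.2⟩)
  have hpair : μ.prod μ = P.map fun ω => (Y1 ω, Y ω) := by
    rw [(indepFun_iff_map_prod_eq_prod_map_map hY1.aemeasurable hY.aemeasurable).1 hindep, hcopy]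
  rw [intervalIntegral.integral_of_le zero_le_one, integral_Ioc_eq_integral_Ioo,
    setIntegral_congr_fun measurableSet_Ioo fun x hx => by rw [hQμ hx],
    integral_quantile_sub_sq hL2, hpair,
    integral_map hY1.aemeasurable (continuous_pow 2).aestronglyMeasurable,
    integral_map (hY1.prodMk hY).aemeasurable
      (continuous_fst.max continuous_snd).aestronglyMeasurable]
end

section
/- Let X = {X(t), t ∈ ℝ^d} be a stochastically continuous random field whose marginal c.d.f. F_X is continuous and strictly increasing on the support. Suppose for each n there exists an admissible parameter λ̃_n with predictor g(λ̃_n, X(T_f)) = X(t̃_n) a.s., where t̃_n is the closest observation point to t and min_{j≤n} ‖t_j - t‖ → 0 as n → ∞. If λ̂_n minimizes the functional λ ↦ 2E[F_X(X(t) ∨ X̂_λ)] - E[F_X(X̂_λ)] over the admissible set, then the predictor X̂_{λ̂_n}(t) converges to X(t) in probability as n → ∞. -/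
/-!
Up to the constant `E[F(X t)]`, the minimised functional `Z ↦ 2 E[F(X t ∨ Z)] - E[F Z]` is the
excursion metric `E|F Z - F(X t)|`, because `|b - a| = 2 (a ∨ b) - a - b`. So `X̂ₙ` is at least
as close to `X t` in this metric as the admissible predictor `X(sₙ)`. Stochastic continuity gives
`X(sₙ) → X t` in probability, hence `F(X(sₙ)) → F(X t)` in probability and, `F` being
`[0, 1]`-valued, in `L¹`. Thus `F(X̂ₙ) → F(X t)` in `L¹` and in probability, and since a
continuous strictly increasing `F` is a topological embedding, `X̂ₙ → X t` in probability.
Both transfers of convergence in probability along `F` go through almost surely convergent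
sub-subsequences.
-/

open MeasureTheory Set Filter Topology

namespace MeasureTheory

variable {α E E' : Type*} {m : MeasurableSpace α} {μ : Measure α}

section Transfer

variable [IsFiniteMeasure μ] [PseudoEMetricSpace E] [PseudoEMetricSpace E']

theorem TendstoInMeasure.of_forall_tendsto_imp
    {f : ℕ → α → E} {g : α → E} {f' : ℕ → α → E'} {g' : α → E'}
    (hf : ∀ n, AEStronglyMeasurable (f n) μ) (hf' : ∀ n, AEStronglyMeasurable (f' n) μ)
    (himp : ∀ x (ns : ℕ → ℕ), Tendsto (fun i ↦ f (ns i) x) atTop (𝓝 (g x)) →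
      Tendsto (fun i ↦ f' (ns i) x) atTop (𝓝 (g' x)))
    (hfg : TendstoInMeasure μ f atTop g) : TendstoInMeasure μ f' atTop g' := by
  rw [exists_seq_tendstoInMeasure_atTop_iff hf] at hfg
  rw [exists_seq_tendstoInMeasure_atTop_iff hf']
  intro ns hns
  obtain ⟨ns', hns', hae⟩ := hfg ns hns
  exact ⟨ns', hns', hae.mono fun x hx ↦ himp x (ns ∘ ns') hx⟩

theorem TendstoInMeasure.comp_continuous {φ : E → E'} (hφ : Continuous φ)
    {f : ℕ → α → E} {g : α → E} (hf : ∀ n, AEStronglyMeasurable (f n) μ)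
    (hφf : ∀ n, AEStronglyMeasurable (fun x ↦ φ (f n x)) μ)
    (hfg : TendstoInMeasure μ f atTop g) :
    TendstoInMeasure μ (fun n x ↦ φ (f n x)) atTop (fun x ↦ φ (g x)) :=
  hfg.of_forall_tendsto_imp hf hφf fun x _ h ↦ (hφ.tendsto (g x)).comp h

theorem TendstoInMeasure.of_comp_isInducing {φ : E → E'} (hφ : IsInducing φ)
    {f : ℕ → α → E} {g : α → E} (hf : ∀ n, AEStronglyMeasurable (f n) μ)
    (hφf : ∀ n, AEStronglyMeasurable (fun x ↦ φ (f n x)) μ)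
    (hfg : TendstoInMeasure μ (fun n x ↦ φ (f n x)) atTop (fun x ↦ φ (g x))) :
    TendstoInMeasure μ f atTop g :=
  hfg.of_forall_tendsto_imp hφf hf fun _ _ h ↦ hφ.tendsto_nhds_iff.2 h

end Transfer

theorem TendstoInMeasure.tendsto_integral_abs_sub_of_bound [IsFiniteMeasure μ]
    {f : ℕ → α → ℝ} {g : α → ℝ} {C : ℝ} (hf : ∀ n, AEStronglyMeasurable (f n) μ)
    (hg : AEStronglyMeasurable g μ) (hbound : ∀ n, ∀ᵐ x ∂μ, |f n x - g x| ≤ C)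
    (hfg : TendstoInMeasure μ f atTop g) :
    Tendsto (fun n ↦ ∫ x, |f n x - g x| ∂μ) atTop (𝓝 0) := by
  refine tendsto_of_subseq_tendsto fun ns hns ↦ ?_
  obtain ⟨ms, -, hae⟩ := (hfg.comp hns).exists_seq_tendsto_ae
  refine ⟨ms, ?_⟩
  simpa using tendsto_integral_of_dominated_convergence (fun _ ↦ C)
    (F := fun i x ↦ |f (ns (ms i)) x - g x|) (f := fun _ ↦ 0)
    (fun _ ↦ continuous_abs.comp_aestronglyMeasurable ((hf _).sub hg)) (integrable_const C)
    (fun _ ↦ (hbound _).mono fun x hx ↦ by simpa using hx)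
    (hae.mono fun x hx ↦ by simpa using (hx.sub_const (g x)).abs)

theorem tendstoInMeasure_of_tendsto_integral_abs_sub {ι : Type*} {l : Filter ι}
    {f : ι → α → ℝ} {g : α → ℝ} (hf : ∀ i, Integrable (f i) μ) (hg : Integrable g μ)
    (hfg : Tendsto (fun i ↦ ∫ x, |f i x - g x| ∂μ) l (𝓝 0)) : TendstoInMeasure μ f l g := by
  refine tendstoInMeasure_of_tendsto_eLpNorm one_ne_zero (fun i ↦ (hf i).1) hg.1 ?_
  have heq (i : ι) : eLpNorm (f i - g) 1 μ = ENNReal.ofReal (∫ x, |f i x - g x| ∂μ) := by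
    rw [eLpNorm_one_eq_lintegral_enorm,
      ← ofReal_integral_norm_eq_lintegral_enorm ((hf i).sub hg)]
    rfl
  simpa [heq] using ENNReal.tendsto_ofReal hfg

end MeasureTheory

theorem Monotone.abs_sub_eq_two_mul_max_sub_sub {β : Type*} [LinearOrder β] {F : β → ℝ}
    (hF : Monotone F) (y z : β) : |F z - F y| = 2 * F (max y z) - F z - F y := by
  rcases le_total y z with h | h
  · rw [max_eq_right h, abs_of_nonneg (sub_nonneg.2 (hF h))]; ring
  · rw [max_eq_left h, abs_of_nonpos (sub_nonpos.2 (hF h))]; ring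

theorem Monotone.integral_abs_sub_comp_eq {α β : Type*} [LinearOrder β] {m : MeasurableSpace α}
    {μ : Measure α} {F : β → ℝ} (hF : Monotone F) {Y Z : α → β}
    (hY : Integrable (fun ω ↦ F (Y ω)) μ) (hZ : Integrable (fun ω ↦ F (Z ω)) μ)
    (hmax : Integrable (fun ω ↦ F (max (Y ω) (Z ω))) μ) :
    ∫ ω, |F (Z ω) - F (Y ω)| ∂μ
      = 2 * ∫ ω, F (max (Y ω) (Z ω)) ∂μ - ∫ ω, F (Z ω) ∂μ - ∫ ω, F (Y ω) ∂μ := by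
  simp_rw [hF.abs_sub_eq_two_mul_max_sub_sub]
  rw [integral_sub (f := fun ω ↦ 2 * F (max (Y ω) (Z ω)) - F (Z ω))
      ((hmax.const_mul 2).sub hZ) hY,
    integral_sub (f := fun ω ↦ 2 * F (max (Y ω) (Z ω))) (hmax.const_mul 2) hZ,
    integral_const_mul]

theorem stmt18_general {Ω : Type*} [MeasurableSpace Ω] (P : Measure Ω) [IsProbabilityMeasure P]
    {d : ℕ} (X : (Fin d → ℝ) → Ω → ℝ) (t : Fin d → ℝ)
    (hXm : ∀ s, Measurable (X s))
    -- stochastic continuity of the field at `t`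
    (hsc : ∀ ε > (0:ℝ),
      Tendsto (fun s => P {ω | ε ≤ |X s ω - X t ω|}) (nhds t) (nhds 0))
    -- common marginal c.d.f., continuous and strictly increasing
    (F : ℝ → ℝ) (hF : ∀ s x, F x = (P {ω | X s ω ≤ x}).toReal)
    (hFc : Continuous F) (hFmono : StrictMono F)
    -- admissible predictors for sample size `n`
    (Λ : ℕ → Set (Ω → ℝ))
    -- the closest observation points converge to `t` and are admissible predictors
    (s : ℕ → (Fin d → ℝ)) (hs : Tendsto s atTop (nhds t))
    (hsin : ∀ n, X (s n) ∈ Λ n)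
    -- the excursion predictor minimizes the target functional over the admissible set
    (Xhat : ℕ → Ω → ℝ) (hXhatm : ∀ n, Measurable (Xhat n))
    (hmin : ∀ n, ∀ Z ∈ Λ n,
      2 * ∫ ω, F (max (X t ω) (Xhat n ω)) ∂P - ∫ ω, F (Xhat n ω) ∂P ≤
        2 * ∫ ω, F (max (X t ω) (Z ω)) ∂P - ∫ ω, F (Z ω) ∂P) :
    -- the predictor converges to `X t` in probability
    ∀ ε > (0:ℝ),
      Tendsto (fun n => P {ω | ε ≤ |Xhat n ω - X t ω|}) atTop (nhds 0) := by
  have hF01 : ∀ x, F x ∈ Icc 0 1 := fun x ↦ hF t x ▸ ⟨measureReal_nonneg, measureReal_le_one⟩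
  have hFsub : ∀ x y, |F x - F y| ≤ 1 := fun x y ↦
    abs_sub_le_of_nonneg_of_le (hF01 x).1 (hF01 x).2 (hF01 y).1 (hF01 y).2
  have hint : ∀ Z : Ω → ℝ, Measurable Z → Integrable (fun ω ↦ F (Z ω)) P := fun Z hZ ↦
    .of_bound (hFc.comp_aestronglyMeasurable hZ.aestronglyMeasurable) 1
      (ae_of_all _ fun ω ↦ abs_le.2 ⟨by linarith [(hF01 (Z ω)).1], (hF01 (Z ω)).2⟩)
  have hcloser : ∀ n, ∫ ω, |F (Xhat n ω) - F (X t ω)| ∂P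
      ≤ ∫ ω, |F (X (s n) ω) - F (X t ω)| ∂P := by
    intro n
    rw [hFmono.monotone.integral_abs_sub_comp_eq (hint _ (hXm t)) (hint _ (hXhatm n))
        (hint _ ((hXm t).max (hXhatm n))),
      hFmono.monotone.integral_abs_sub_comp_eq (hint _ (hXm t)) (hint _ (hXm (s n)))
        (hint _ ((hXm t).max (hXm (s n))))]
    linarith [hmin n _ (hsin n)]
  have hXs : TendstoInMeasure P (fun n ↦ X (s n)) atTop (X t) :=
    tendstoInMeasure_iff_dist.2 fun ε hε ↦ by
      simpa only [Real.dist_eq, Function.comp_def] using (hsc ε hε).comp hs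
  have hFXs := hXs.comp_continuous hFc (fun _ ↦ (hXm _).aestronglyMeasurable)
    (fun _ ↦ (hint _ (hXm _)).1)
  have hL1s := hFXs.tendsto_integral_abs_sub_of_bound (C := 1) (fun _ ↦ (hint _ (hXm _)).1)
    (hint _ (hXm t)).1 (fun _ ↦ ae_of_all _ fun _ ↦ hFsub _ _)
  have hL1hat : Tendsto (fun n ↦ ∫ ω, |F (Xhat n ω) - F (X t ω)| ∂P) atTop (𝓝 0) :=
    squeeze_zero (fun _ ↦ integral_nonneg fun _ ↦ abs_nonneg _) hcloser hL1s
  have hemb : IsEmbedding F :=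
    hFmono.isEmbedding_of_ordConnected (isPreconnected_range hFc).ordConnected
  have hXhat := (tendstoInMeasure_of_tendsto_integral_abs_sub (fun n ↦ hint _ (hXhatm n))
    (hint _ (hXm t)) hL1hat).of_comp_isInducing hemb.isInducing
    (fun n ↦ (hXhatm n).aestronglyMeasurable) (fun n ↦ (hint _ (hXhatm n)).1)
  simpa only [Real.dist_eq] using tendstoInMeasure_iff_dist.1 hXhat

theorem stmt18 {Ω : Type*} [MeasurableSpace Ω] (P : Measure Ω) [IsProbabilityMeasure P]
    {d : ℕ} (X : (Fin d → ℝ) → Ω → ℝ) (t : Fin d → ℝ)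
    (hXm : ∀ s, Measurable (X s))
    -- stochastic continuity of the field at `t`
    (hsc : ∀ ε > (0:ℝ),
      Tendsto (fun s => P {ω | ε ≤ |X s ω - X t ω|}) (nhds t) (nhds 0))
    -- common marginal c.d.f., continuous and strictly increasing
    (F : ℝ → ℝ) (hF : ∀ s x, F x = (P {ω | X s ω ≤ x}).toReal)
    (hFc : Continuous F) (hFmono : StrictMono F)
    -- admissible predictors for sample size `n`
    (Λ : ℕ → Set (Ω → ℝ)) (hΛm : ∀ n, ∀ Z ∈ Λ n, Measurable Z)
    -- the closest observation points converge to `t` and are admissible predictors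
    (s : ℕ → (Fin d → ℝ)) (hs : Tendsto s atTop (nhds t))
    (hsin : ∀ n, X (s n) ∈ Λ n)
    -- the excursion predictor minimizes the target functional over the admissible set
    (Xhat : ℕ → Ω → ℝ) (hXhatm : ∀ n, Measurable (Xhat n))
    (hmem : ∀ n, Xhat n ∈ Λ n)
    (hmin : ∀ n, ∀ Z ∈ Λ n,
      2 * ∫ ω, F (max (X t ω) (Xhat n ω)) ∂P - ∫ ω, F (Xhat n ω) ∂P ≤
        2 * ∫ ω, F (max (X t ω) (Z ω)) ∂P - ∫ ω, F (Z ω) ∂P) :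
    -- the predictor converges to `X t` in probability
    ∀ ε > (0:ℝ),
      Tendsto (fun n => P {ω | ε ≤ |Xhat n ω - X t ω|}) atTop (nhds 0) :=
  stmt18_general P X t hXm hsc F hF hFc hFmono Λ s hs hsin Xhat hXhatm hmin
end

section
/- Let Λ ⊆ ℝ^n and suppose X̂_{λ_k} → +∞ in probability for every sequence λ_k ∈ Λ with |λ_k| → ∞, where X̂_λ takes values in ℝ and F_X is a continuous c.d.f. Then Φ(λ_k) := 2E[F_X(X ∨ X̂_{λ_k})] - E[F_X(X̂_{λ_k})] → 1 as |λ_k| → ∞. Consequently, if there exists λ_0 ∈ Λ with Φ(λ_0) < 1, there exists M > 0 such that inf_{λ∈Λ} Φ(λ) = inf_{λ∈Λ, |λ|≤M} Φ(λ). -/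
/-! Pointwise `F(Y) ≥ F(c) - 1_{Y ≤ c}`, so `E[F(Y)] ≥ F(c) - P(Y ≤ c)`; when `Y → +∞` in
probability this forces `E[F(Y)] → 1`, since `F(c) → 1` as `c → ∞`. The same applies to
`X ∨ Y ≥ Y`, hence `Φ → 2 - 1 = 1`. So if `Φ(λ₀) < 1`, then `Φ > Φ(λ₀)` on `Λ` outside a large
ball containing `λ₀`, and the infimum over `Λ` is already the infimum over that ball. -/

open MeasureTheory Set Filter

/-- The target functional `Φ(λ) = 2 E[F(X ∨ X̂_λ)] - E[F(X̂_λ)]`. -/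
noncomputable def targetPhi {Ω : Type*} [MeasurableSpace Ω] (P : Measure Ω)
    (X : Ω → ℝ) (F : ℝ → ℝ) {n : ℕ} (Xhat : EuclideanSpace ℝ (Fin n) → Ω → ℝ)
    (lam : EuclideanSpace ℝ (Fin n)) : ℝ :=
  2 * ∫ ω, F (max (X ω) (Xhat lam ω)) ∂P - ∫ ω, F (Xhat lam ω) ∂P

theorem csInf_image_eq_csInf_image_of_forall_le {α β : Type*} [ConditionallyCompleteLattice β]
    {f : α → β} {s t : Set α} (hts : t ⊆ s) (hbdd : BddBelow (f '' s)) {a : α} (ha : a ∈ t)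
    (hle : ∀ x ∈ s, x ∉ t → f a ≤ f x) :
    sInf (f '' s) = sInf (f '' t) := by
  have hbddt : BddBelow (f '' t) := hbdd.mono (image_mono hts)
  refine le_antisymm (csInf_le_csInf hbdd ⟨f a, mem_image_of_mem f ha⟩ (image_mono hts)) ?_
  refine le_csInf ⟨f a, mem_image_of_mem f (hts ha)⟩ (forall_mem_image.2 fun x hx => ?_)
  by_cases hxt : x ∈ t
  · exact csInf_le hbddt (mem_image_of_mem f hxt)
  · exact (csInf_le hbddt (mem_image_of_mem f ha)).trans (hle x hx hxt)

theorem eventually_forall_norm_gt_lt {E : Type*} [SeminormedAddCommGroup E] {Λ : Set E}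
    {f : E → ℝ} {L a : ℝ}
    (hf : ∀ lam : ℕ → E, (∀ k, lam k ∈ Λ) → Tendsto (fun k => ‖lam k‖) atTop atTop →
      Tendsto (fun k => f (lam k)) atTop (nhds L))
    (ha : a < L) :
    ∀ᶠ R in atTop, ∀ x ∈ Λ, R < ‖x‖ → a < f x := by
  suffices h : ∃ R, ∀ x ∈ Λ, R < ‖x‖ → a < f x by
    obtain ⟨R, hR⟩ := h
    filter_upwards [eventually_ge_atTop R] with R' hR' x hx hx'
    exact hR x hx (hR'.trans_lt hx')
  by_contra! h
  choose x hxΛ hxnorm hxf using fun k : ℕ => h k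
  have hx_tendsto : Tendsto (fun k => ‖x k‖) atTop atTop :=
    tendsto_atTop_mono (fun k => (hxnorm k).le) tendsto_natCast_atTop_atTop
  exact ha.not_ge (le_of_tendsto' (hf x hxΛ hx_tendsto) hxf)

section UnitIntervalValued

variable {Ω : Type*} [MeasurableSpace Ω] {P : Measure Ω} [IsProbabilityMeasure P]
  {F : ℝ → ℝ}

theorem integrable_comp_of_monotone {Y : Ω → ℝ} (hFmono : Monotone F) (hF0 : ∀ x, 0 ≤ F x)
    (hF1 : ∀ x, F x ≤ 1) (hY : Measurable Y) :
    Integrable (fun ω => F (Y ω)) P :=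
  .of_bound (hFmono.measurable.comp hY).aestronglyMeasurable 1 <|
    ae_of_all _ fun ω => by rw [Real.norm_of_nonneg (hF0 _)]; exact hF1 _

theorem integral_comp_le_one {Y : Ω → ℝ} (hF1 : ∀ x, F x ≤ 1) : ∫ ω, F (Y ω) ∂P ≤ 1 := by
  by_cases hint : Integrable (fun ω => F (Y ω)) P
  · simpa using integral_mono hint (integrable_const (1 : ℝ)) fun ω => hF1 (Y ω)
  · rw [integral_undef hint]
    exact zero_le_one

theorem sub_measureReal_le_integral_comp {Y : Ω → ℝ} (hFmono : Monotone F) (hF0 : ∀ x, 0 ≤ F x)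
    (hF1 : ∀ x, F x ≤ 1) (hY : Measurable Y) (c : ℝ) :
    F c - P.real {ω | Y ω ≤ c} ≤ ∫ ω, F (Y ω) ∂P := by
  have hs : MeasurableSet {ω | Y ω ≤ c} := measurableSet_le hY measurable_const
  have hpointwise : ∀ ω, F c - {ω | Y ω ≤ c}.indicator 1 ω ≤ F (Y ω) := by
    intro ω
    by_cases hω : Y ω ≤ c
    · simp only [indicator_of_mem (show ω ∈ {ω | Y ω ≤ c} from hω), Pi.one_apply]
      linarith [hF1 c, hF0 (Y ω)]
    · simp only [indicator_of_notMem (show ω ∉ {ω | Y ω ≤ c} from hω), sub_zero]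
      exact hFmono (not_le.1 hω).le
  have hind : Integrable ({ω | Y ω ≤ c}.indicator (1 : Ω → ℝ)) P :=
    (integrable_const (1 : ℝ)).indicator hs
  calc F c - P.real {ω | Y ω ≤ c}
      = ∫ ω, (F c - {ω | Y ω ≤ c}.indicator 1 ω) ∂P := by
        rw [integral_sub (integrable_const _) hind, integral_indicator_one hs]
        simp
    _ ≤ ∫ ω, F (Y ω) ∂P :=
        integral_mono ((integrable_const _).sub hind)
          (integrable_comp_of_monotone hFmono hF0 hF1 hY) hpointwise

theorem tendsto_integral_comp_of_tendsto_measure_le {ι : Type*} {l : Filter ι}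
    (hFmono : Monotone F) (hF0 : ∀ x, 0 ≤ F x) (hF1 : ∀ x, F x ≤ 1)
    (hFtop : Tendsto F atTop (nhds 1)) {Y : ι → Ω → ℝ} (hY : ∀ k, Measurable (Y k))
    (hdiv : ∀ c, Tendsto (fun k => P {ω | Y k ω ≤ c}) l (nhds 0)) :
    Tendsto (fun k => ∫ ω, F (Y k ω) ∂P) l (nhds 1) := by
  refine tendsto_order.2 ⟨fun a ha => ?_, fun b hb =>
    .of_forall fun k => (integral_comp_le_one hF1).trans_lt hb⟩
  obtain ⟨c, hc⟩ := (hFtop.eventually (eventually_gt_nhds ha)).exists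
  have hlower : Tendsto (fun k => F c - P.real {ω | Y k ω ≤ c}) l (nhds (F c - 0)) :=
    tendsto_const_nhds.sub ((ENNReal.tendsto_toReal ENNReal.zero_ne_top).comp (hdiv c))
  filter_upwards [hlower.eventually (eventually_gt_nhds (by simpa using hc))] with k hk
  exact hk.trans_le (sub_measureReal_le_integral_comp hFmono hF0 hF1 (hY k) c)

end UnitIntervalValued

section TargetPhi

variable {Ω : Type*} [MeasurableSpace Ω] {P : Measure Ω} [IsProbabilityMeasure P]
  {X : Ω → ℝ} {F : ℝ → ℝ} {n : ℕ} {Xhat : EuclideanSpace ℝ (Fin n) → Ω → ℝ}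

theorem neg_one_le_targetPhi (hF0 : ∀ x, 0 ≤ F x) (hF1 : ∀ x, F x ≤ 1)
    (lam : EuclideanSpace ℝ (Fin n)) :
    -1 ≤ targetPhi P X F Xhat lam := by
  have hmax : 0 ≤ ∫ ω, F (max (X ω) (Xhat lam ω)) ∂P := integral_nonneg fun ω => hF0 _
  have hhat : ∫ ω, F (Xhat lam ω) ∂P ≤ 1 := integral_comp_le_one hF1
  unfold targetPhi
  linarith

theorem tendsto_targetPhi {ι : Type*} {l : Filter ι} (hX : Measurable X)
    (hXhatm : ∀ lam, Measurable (Xhat lam))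
    (hFmono : Monotone F) (hF0 : ∀ x, 0 ≤ F x) (hF1 : ∀ x, F x ≤ 1)
    (hFtop : Tendsto F atTop (nhds 1)) {lam : ι → EuclideanSpace ℝ (Fin n)}
    (hdiv : ∀ c, Tendsto (fun k => P {ω | Xhat (lam k) ω ≤ c}) l (nhds 0)) :
    Tendsto (fun k => targetPhi P X F Xhat (lam k)) l (nhds 1) := by
  have hdiv_max : ∀ c, Tendsto (fun k => P {ω | max (X ω) (Xhat (lam k) ω) ≤ c}) l (nhds 0) :=
    fun c => tendsto_of_tendsto_of_tendsto_of_le_of_le tendsto_const_nhds (hdiv c)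
      (fun k => zero_le) fun k => measure_mono fun ω (hω : _ ≤ c) => (le_max_right _ _).trans hω
  have hmax := tendsto_integral_comp_of_tendsto_measure_le hFmono hF0 hF1 hFtop
    (fun k => hX.max (hXhatm (lam k))) hdiv_max
  have hhat := tendsto_integral_comp_of_tendsto_measure_le hFmono hF0 hF1 hFtop
    (fun k => hXhatm (lam k)) hdiv
  have h : Tendsto (fun k => targetPhi P X F Xhat (lam k)) l (nhds (2 * 1 - 1)) :=
    (hmax.const_mul 2).sub hhat
  rwa [show (2 : ℝ) * 1 - 1 = 1 by norm_num] at h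

end TargetPhi

theorem stmt19_general {Ω : Type*} [MeasurableSpace Ω] (P : Measure Ω) [IsProbabilityMeasure P]
    {n : ℕ} (Λ : Set (EuclideanSpace ℝ (Fin n)))
    (X : Ω → ℝ) (hX : Measurable X)
    (Xhat : EuclideanSpace ℝ (Fin n) → Ω → ℝ) (hXhatm : ∀ lam, Measurable (Xhat lam))
    -- `F` is a continuous c.d.f.
    (F : ℝ → ℝ) (hFmono : Monotone F)
    (hF0 : ∀ x, 0 ≤ F x) (hF1 : ∀ x, F x ≤ 1)
    (hFtop : Tendsto F atTop (nhds 1))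
    -- predictors diverge to `+∞` in probability as `|λ| → ∞` along `Λ`
    (hdiv : ∀ lam : ℕ → EuclideanSpace ℝ (Fin n), (∀ k, lam k ∈ Λ) →
      Tendsto (fun k => ‖lam k‖) atTop atTop →
      ∀ c : ℝ, Tendsto (fun k => P {ω | Xhat (lam k) ω ≤ c}) atTop (nhds 0)) :
    -- (1) `Φ(λ_k) → 1` along any such sequence
    (∀ lam : ℕ → EuclideanSpace ℝ (Fin n), (∀ k, lam k ∈ Λ) →
      Tendsto (fun k => ‖lam k‖) atTop atTop →
      Tendsto (fun k => targetPhi P X F Xhat (lam k)) atTop (nhds 1)) ∧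
    -- (2) the minimization can be restricted to a bounded set
    ((∃ lam0 ∈ Λ, targetPhi P X F Xhat lam0 < 1) →
      ∃ M > (0:ℝ),
        sInf (targetPhi P X F Xhat '' Λ)
          = sInf (targetPhi P X F Xhat '' (Λ ∩ {lam | ‖lam‖ ≤ M}))) := by
  have hlim : ∀ lam : ℕ → EuclideanSpace ℝ (Fin n), (∀ k, lam k ∈ Λ) →
      Tendsto (fun k => ‖lam k‖) atTop atTop →
      Tendsto (fun k => targetPhi P X F Xhat (lam k)) atTop (nhds 1) :=
    fun lam hmem hnorm =>
      tendsto_targetPhi hX hXhatm hFmono hF0 hF1 hFtop (hdiv lam hmem hnorm)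
  refine ⟨hlim, ?_⟩
  rintro ⟨lam0, hlam0, hlt⟩
  obtain ⟨M, ⟨hfar, hM0⟩, hMpos⟩ := (((eventually_forall_norm_gt_lt hlim hlt).and
    (eventually_ge_atTop ‖lam0‖)).and (eventually_gt_atTop 0)).exists
  have hbdd : BddBelow (targetPhi P X F Xhat '' Λ) :=
    ⟨-1, forall_mem_image.2 fun lam _ => neg_one_le_targetPhi hF0 hF1 lam⟩
  refine ⟨M, hMpos, csInf_image_eq_csInf_image_of_forall_le inter_subset_left hbdd
    ⟨hlam0, hM0⟩ fun lam hlam hfar' => (hfar lam hlam ?_).le⟩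
  exact lt_of_not_ge fun hle => hfar' ⟨hlam, hle⟩

theorem stmt19 {Ω : Type*} [MeasurableSpace Ω] (P : Measure Ω) [IsProbabilityMeasure P]
    {n : ℕ} (Λ : Set (EuclideanSpace ℝ (Fin n)))
    (X : Ω → ℝ) (hX : Measurable X)
    (Xhat : EuclideanSpace ℝ (Fin n) → Ω → ℝ) (hXhatm : ∀ lam, Measurable (Xhat lam))
    -- `F` is a continuous c.d.f.
    (F : ℝ → ℝ) (hFmono : Monotone F) (hFc : Continuous F)
    (hF0 : ∀ x, 0 ≤ F x) (hF1 : ∀ x, F x ≤ 1)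
    (hFbot : Tendsto F atBot (nhds 0)) (hFtop : Tendsto F atTop (nhds 1))
    -- predictors diverge to `+∞` in probability as `|λ| → ∞` along `Λ`
    (hdiv : ∀ lam : ℕ → EuclideanSpace ℝ (Fin n), (∀ k, lam k ∈ Λ) →
      Tendsto (fun k => ‖lam k‖) atTop atTop →
      ∀ c : ℝ, Tendsto (fun k => P {ω | Xhat (lam k) ω ≤ c}) atTop (nhds 0)) :
    -- (1) `Φ(λ_k) → 1` along any such sequence
    (∀ lam : ℕ → EuclideanSpace ℝ (Fin n), (∀ k, lam k ∈ Λ) →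
      Tendsto (fun k => ‖lam k‖) atTop atTop →
      Tendsto (fun k => targetPhi P X F Xhat (lam k)) atTop (nhds 1)) ∧
    -- (2) the minimization can be restricted to a bounded set
    ((∃ lam0 ∈ Λ, targetPhi P X F Xhat lam0 < 1) →
      ∃ M > (0:ℝ),
        sInf (targetPhi P X F Xhat '' Λ)
          = sInf (targetPhi P X F Xhat '' (Λ ∩ {lam | ‖lam‖ ≤ M}))) :=
  stmt19_general P Λ X hX Xhat hXhatm F hFmono hF0 hF1 hFtop hdiv
end
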